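/- If a 3-uniform hypergraph H admits a proper 3-coloring, then the graph G' obtained from its incidence graph G = (Q, S, E) by attaching a pendant vertex p^s to each s ∈ S admits a valid 4-role coloring, with role graph the star K_{1,3} centered at color 4. -/

import Mathlib

def IsRoleColoring {V C : Type*} (G : SimpleGraph V) (α : V → C) : Prop :=
  Function.Surjective α ∧
    ∀ u v : V, α u = α v → α '' (G.neighborSet u) = α '' (G.neighborSet v)

/-- Vertex set of `G'`: hypergraph vertices `Q`, hyperedges `S_H`, and one
pendant vertex `p^s` for each hyperedge `s`. -/
def W17 (Q : Type*) (SH : Finset (Finset Q)) : Type _ :=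
  Q ⊕ ({e // e ∈ SH} ⊕ {e // e ∈ SH})

/-- Base adjacency for `G'`: `q — s` when `q ∈ s`, and `s — p^s`. -/
def rel17 {Q : Type*} (SH : Finset (Finset Q)) : W17 Q SH → W17 Q SH → Prop
  | .inl q, .inr (.inl s) => q ∈ s.val
  | .inr (.inl s), .inr (.inr s') => s = s'
  | _, _ => False

/-- The graph `G'` obtained from the incidence graph of `(Q, SH)` by attaching
a pendant vertex `p^s` to each hyperedge vertex `s`. -/
def G17 {Q : Type*} (SH : Finset (Finset Q)) : SimpleGraph (W17 Q SH) :=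
  SimpleGraph.fromRel (rel17 SH)

/-
Colour each hypergraph vertex `q` by `β q`, every hyperedge vertex `s` by the fourth colour, and
the pendant `p^s` by the colour that `β '' s` misses, if any (as `s` is not monochromatic, it misses
at most one). Then every hyperedge vertex sees exactly the three colours `≠ 4`, and every
other vertex sees only the colour `4` (a hypergraph vertex has a neighbour because `G'` is
connected), so the colour set of a neighbourhood depends only on whether the vertex has colour `4`.
-/

theorem Finset.exists_insert_eq_univ {α : Type*} [Fintype α] [DecidableEq α] [Nonempty α]
    {T : Finset α} (h : Fintype.card α ≤ T.card + 1) : ∃ c, insert c T = Finset.univ := by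
  by_cases hT : T = Finset.univ
  · exact ⟨Classical.arbitrary α, by simp [hT]⟩
  obtain ⟨c, hc⟩ : ∃ c, c ∉ T := by simpa [Finset.eq_univ_iff_forall] using hT
  refine ⟨c, Finset.eq_univ_of_card _ ?_⟩
  have := Finset.card_le_univ (insert c T)
  rw [Finset.card_insert_of_notMem hc] at this ⊢
  omega

theorem Fin.range_castSucc_eq_compl_last (n : ℕ) :
    Set.range (Fin.castSucc : Fin n → Fin (n + 1)) = {Fin.last n}ᶜ := by
  ext x
  exact Fin.exists_castSucc_eq

section StarRoleColoring

variable {V C : Type*} {G : SimpleGraph V} {α : V → C} {c : C}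

theorem SimpleGraph.Adj.star_of_image_neighborSet
    (hcenter : ∀ v, α v = c → α '' G.neighborSet v = {c}ᶜ)
    (hleaf : ∀ v, α v ≠ c → α '' G.neighborSet v = {c}) {u v : V} (huv : G.Adj u v) :
    (α u = c ∧ α v ≠ c) ∨ (α v = c ∧ α u ≠ c) := by
  have hv : α v ∈ α '' G.neighborSet u := Set.mem_image_of_mem α huv
  by_cases hu : α u = c
  · rw [hcenter u hu] at hv
    exact Or.inl ⟨hu, hv⟩
  · rw [hleaf u hu] at hv
    exact Or.inr ⟨hv, hu⟩

theorem isRoleColoring_of_image_neighborSet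
    (hcenter : ∀ v, α v = c → α '' G.neighborSet v = {c}ᶜ)
    (hleaf : ∀ v, α v ≠ c → α '' G.neighborSet v = {c}) (hc : ∃ v, α v = c) :
    IsRoleColoring G α := by
  obtain ⟨v₀, hv₀⟩ := hc
  refine ⟨fun x => ?_, fun u v huv => ?_⟩
  · by_cases hx : x = c
    · exact ⟨v₀, hv₀.trans hx.symm⟩
    · obtain ⟨v, -, hv⟩ : x ∈ α '' G.neighborSet v₀ := by rw [hcenter v₀ hv₀]; exact hx
      exact ⟨v, hv⟩
  · by_cases hu : α u = c
    · rw [hcenter u hu, hcenter v (huv ▸ hu)]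
    · rw [hleaf u hu, hleaf v (huv ▸ hu)]

end StarRoleColoring

namespace W17

variable {Q : Type*} {SH : Finset (Finset Q)}

-- Constructors typed as `W17`: a bare `Sum.inl q` has type `Q ⊕ _`, which `rw` and `simp` do not
-- identify with the semireducible `W17 Q SH`.

def vertex (q : Q) : W17 Q SH := .inl q

def edge (s : SH) : W17 Q SH := .inr (.inl s)

def pendant (s : SH) : W17 Q SH := .inr (.inr s)

end W17

namespace G17

open W17

variable {Q : Type*} {SH : Finset (Finset Q)}

theorem adj_iff (u v : W17 Q SH) :
    (G17 SH).Adj u v ↔ u ≠ v ∧ (rel17 SH u v ∨ rel17 SH v u) :=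
  SimpleGraph.fromRel_adj _ _ _

theorem neighborSet_vertex (q : Q) :
    (G17 SH).neighborSet (vertex q) = edge '' {s : SH | q ∈ s.1} := by
  ext v
  rw [SimpleGraph.mem_neighborSet, adj_iff, Set.mem_image]
  rcases v with q' | s | s <;> simp only [vertex, edge, rel17] <;> delta W17 <;> simp

theorem neighborSet_edge (s : SH) :
    (G17 SH).neighborSet (edge s) = insert (pendant s) (vertex '' {q | q ∈ s.1}) := by
  ext v
  rw [SimpleGraph.mem_neighborSet, adj_iff, Set.mem_insert_iff, Set.mem_image]
  rcases v with q | s' | s' <;> simp only [vertex, edge, pendant, rel17] <;> delta W17 <;>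
    simp [eq_comm]

theorem neighborSet_pendant (s : SH) :
    (G17 SH).neighborSet (pendant s) = {edge s} := by
  ext v
  rw [SimpleGraph.mem_neighborSet, adj_iff, Set.mem_singleton_iff]
  rcases v with q | s' | s' <;> simp only [edge, pendant, rel17] <;> delta W17 <;> simp [eq_comm]

theorem exists_mem_of_connected (hconn : (G17 SH).Connected) (hSH : SH.Nonempty) (q : Q) :
    ∃ s : SH, q ∈ s.1 := by
  obtain ⟨e, he⟩ := hSH
  have : Nontrivial (W17 Q SH) := ⟨edge ⟨e, he⟩, pendant ⟨e, he⟩, nofun⟩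
  obtain ⟨v, hv⟩ := hconn.preconnected.exists_adj_of_nontrivial (vertex q)
  rw [← SimpleGraph.mem_neighborSet, neighborSet_vertex] at hv
  obtain ⟨s, hs, -⟩ := hv
  exact ⟨s, hs⟩

variable {n : ℕ} (β : Q → Fin n) (p : SH → Fin n)

def starColoring : W17 Q SH → Fin (n + 1)
  | .inl q => (β q).castSucc
  | .inr (.inl _) => Fin.last n
  | .inr (.inr s) => (p s).castSucc

@[simp]
theorem starColoring_edge (s : SH) : starColoring β p (edge s) = Fin.last n := rfl

theorem image_neighborSet_vertex {q : Q} (hq : ∃ s : SH, q ∈ s.1) :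
    starColoring β p '' (G17 SH).neighborSet (vertex q) = {Fin.last n} := by
  rw [neighborSet_vertex, Set.image_image]
  simpa using Set.Nonempty.image_const (s := {s : SH | q ∈ s.1}) hq (Fin.last n)

theorem image_neighborSet_edge {s : SH} (hs : insert (p s) (s.1.image β) = Finset.univ) :
    starColoring β p '' (G17 SH).neighborSet (edge s) = {Fin.last n}ᶜ := by
  rw [← Fin.range_castSucc_eq_compl_last, ← Set.image_univ, ← Finset.coe_univ, ← hs,
    neighborSet_edge, Finset.coe_insert, Finset.coe_image, Set.image_insert_eq, Set.image_insert_eq,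
    Set.image_image, Set.image_image]
  rfl

theorem image_neighborSet_pendant (s : SH) :
    starColoring β p '' (G17 SH).neighborSet (pendant s) = {Fin.last n} := by
  rw [neighborSet_pendant, Set.image_singleton, starColoring_edge]

theorem image_neighborSet_of_eq_last (hp : ∀ s, insert (p s) (s.1.image β) = Finset.univ)
    (v : W17 Q SH) (hv : starColoring β p v = Fin.last n) :
    starColoring β p '' (G17 SH).neighborSet v = {Fin.last n}ᶜ := by
  rcases v with q | s | s
  · exact absurd hv (Fin.castSucc_ne_last _)
  · exact image_neighborSet_edge β p (hp s)
  · exact absurd hv (Fin.castSucc_ne_last _)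

theorem image_neighborSet_of_ne_last (hcov : ∀ q : Q, ∃ s : SH, q ∈ s.1)
    (v : W17 Q SH) (hv : starColoring β p v ≠ Fin.last n) :
    starColoring β p '' (G17 SH).neighborSet v = {Fin.last n} := by
  rcases v with q | s | s
  · exact image_neighborSet_vertex β p (hcov q)
  · exact absurd rfl hv
  · exact image_neighborSet_pendant β p s

end G17

theorem hypergraph_three_coloring_four_role_general {Q : Type*}
    (SH : Finset (Finset Q))
    (hconn : (G17 SH).Connected) (hSH : SH.Nonempty)
    (hcol : ∃ β : Q → Fin 3, ∀ e ∈ SH, ∃ q₁ ∈ e, ∃ q₂ ∈ e, β q₁ ≠ β q₂) :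
    ∃ α : W17 Q SH → Fin 4, IsRoleColoring (G17 SH) α ∧
      ∀ u v : W17 Q SH, (G17 SH).Adj u v →
        ((α u = 3 ∧ α v ≠ 3) ∨ (α v = 3 ∧ α u ≠ 3)) := by
  obtain ⟨β, hβ⟩ := hcol
  have hcomplete : ∀ s : SH, ∃ c, insert c (s.1.image β) = Finset.univ := fun s => by
    obtain ⟨q₁, hq₁, q₂, hq₂, hne⟩ := hβ s.1 s.2
    have : 1 < (s.1.image β).card := Finset.one_lt_card.2
      ⟨_, Finset.mem_image_of_mem β hq₁, _, Finset.mem_image_of_mem β hq₂, hne⟩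
    exact Finset.exists_insert_eq_univ (by simp only [Fintype.card_fin]; omega)
  choose p hp using hcomplete
  have hcenter := G17.image_neighborSet_of_eq_last β p hp
  have hleaf := G17.image_neighborSet_of_ne_last β p (G17.exists_mem_of_connected hconn hSH)
  obtain ⟨e, he⟩ := hSH
  exact ⟨G17.starColoring β p,
    isRoleColoring_of_image_neighborSet hcenter hleaf ⟨W17.edge ⟨e, he⟩, rfl⟩,
    fun u v huv => huv.star_of_image_neighborSet hcenter hleaf⟩

/-- If a 3-uniform hypergraph admits a proper 3-coloring, then the graph `G'`
obtained from its incidence graph by attaching a pendant vertex to each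
hyperedge vertex admits a valid 4-role coloring whose role graph is the star
`K_{1,3}` centered at color 4 (here the color `3 : Fin 4`): every edge of `G'`
joins a vertex of color 4 to a vertex of another color. -/
theorem hypergraph_three_coloring_four_role {Q : Type*} [Fintype Q] [DecidableEq Q]
    (SH : Finset (Finset Q)) (huniform : ∀ e ∈ SH, e.card = 3)
    (hconn : (G17 SH).Connected) (hSH : SH.Nonempty)
    (hcol : ∃ β : Q → Fin 3, ∀ e ∈ SH, ∃ q₁ ∈ e, ∃ q₂ ∈ e, β q₁ ≠ β q₂) :
    ∃ α : W17 Q SH → Fin 4, IsRoleColoring (G17 SH) α ∧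
      ∀ u v : W17 Q SH, (G17 SH).Adj u v →
        ((α u = 3 ∧ α v ≠ 3) ∨ (α v = 3 ∧ α u ≠ 3)) :=
  hypergraph_three_coloring_four_role_general SH hconn hSH hcol
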